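/- arXiv:1706.07270 — 4 statements merged into one kernel-verified Lean document; each statement's English description precedes it below -/
import Mathlib

section
/- (Stability.) Let R, R̃ ∈ ℝ^{d×(k+1)} and λ > 0. Let c^λ and c̃^λ be the regularized extrapolation coefficients computed from R and R̃ respectively, and let P = RᵀR − R̃ᵀR̃. Then ‖c̃^λ − c^λ‖ ≤ (‖P‖/λ)·‖c^λ‖. -/
open Matrix

/-- Operator 2-norm of a real matrix (norm of the induced map between Euclidean spaces). -/
noncomputable def opNorm {n m : ℕ} (M : Matrix (Fin n) (Fin m) ℝ) : ℝ :=
  ‖(Matrix.toEuclideanLin M).toContinuousLinearMap‖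

/-- `c` is the vector of regularized extrapolation coefficients for the matrix `M`
and regularization parameter `lam`: it minimizes `‖M c‖² + lam ‖c‖²` over `{c : 𝟙ᵀc = 1}`. -/
def IsRNACoeff {d k : ℕ} (M : Matrix (Fin d) (Fin (k+1)) ℝ) (lam : ℝ)
    (c : EuclideanSpace ℝ (Fin (k+1))) : Prop :=
  (∑ i, c i) = 1 ∧ ∀ c' : EuclideanSpace ℝ (Fin (k+1)), (∑ i, c' i) = 1 →
    ‖Matrix.toEuclideanLin M c‖ ^ 2 + lam * ‖c‖ ^ 2 ≤
      ‖Matrix.toEuclideanLin M c'‖ ^ 2 + lam * ‖c'‖ ^ 2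

/-!
Both coefficient vectors minimize a strictly convex quadratic over the same affine hyperplane
`𝟙ᵀc = 1`, so the first-order conditions `⟪R c, R v⟫ + λ⟪c, v⟫ = 0` and
`⟪R̃ c̃, R̃ v⟫ + λ⟪c̃, v⟫ = 0` hold for every direction `v` with `𝟙ᵀv = 0`.
Taking `v = δ := c̃ - c` and subtracting gives `‖R̃ δ‖² + λ‖δ‖² = ⟪P c, δ⟫`,
hence `λ‖δ‖² ≤ ‖P‖ ‖c‖ ‖δ‖`.
-/

open scoped InnerProductSpace

theorem eq_zero_of_forall_quadratic_nonneg {a b : ℝ} (h : ∀ t : ℝ, 0 ≤ a * (t * t) + b * t) :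
    b = 0 := by
  have hdisc : discrim a b 0 ≤ 0 := discrim_le_zero (by simpa using h)
  rw [discrim, mul_zero, sub_zero] at hdisc
  exact pow_eq_zero_iff two_ne_zero |>.mp (le_antisymm hdisc (sq_nonneg b))

theorem norm_add_smul_sq_real {E : Type*} [NormedAddCommGroup E] [InnerProductSpace ℝ E]
    (x y : E) (t : ℝ) : ‖x + t • y‖ ^ 2 = ‖x‖ ^ 2 + 2 * t * ⟪x, y⟫_ℝ + t ^ 2 * ‖y‖ ^ 2 := by
  rw [norm_add_sq_real, real_inner_smul_right, norm_smul, mul_pow, Real.norm_eq_abs, sq_abs]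
  ring

theorem inner_map_add_mul_inner_eq_zero {E F : Type*} [NormedAddCommGroup E]
    [InnerProductSpace ℝ E] [NormedAddCommGroup F] [InnerProductSpace ℝ F] (A : E →ₗ[ℝ] F)
    (lam : ℝ) {c v : E}
    (h : ∀ t : ℝ, ‖A c‖ ^ 2 + lam * ‖c‖ ^ 2 ≤ ‖A (c + t • v)‖ ^ 2 + lam * ‖c + t • v‖ ^ 2) :
    ⟪A c, A v⟫_ℝ + lam * ⟪c, v⟫_ℝ = 0 := by
  have hquad : ∀ t : ℝ, 0 ≤ (‖A v‖ ^ 2 + lam * ‖v‖ ^ 2) * (t * t) +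
      2 * (⟪A c, A v⟫_ℝ + lam * ⟪c, v⟫_ℝ) * t := by
    intro t
    have ht := h t
    rw [map_add, map_smul, norm_add_smul_sq_real, norm_add_smul_sq_real] at ht
    linarith
  simpa using eq_zero_of_forall_quadratic_nonneg hquad

theorem Matrix.inner_toEuclideanLin_toEuclideanLin {𝕜 m n : Type*} [RCLike 𝕜] [Fintype m]
    [DecidableEq m] [Fintype n] [DecidableEq n] (M : Matrix m n 𝕜) (x y : EuclideanSpace 𝕜 n) :
    ⟪toEuclideanLin M x, toEuclideanLin M y⟫_𝕜 = ⟪toEuclideanLin (Mᴴ * M) x, y⟫_𝕜 := by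
  rw [toLpLin_mul_same, LinearMap.comp_apply, toEuclideanLin_conjTranspose_eq_adjoint,
    LinearMap.adjoint_inner_left]

theorem IsRNACoeff.inner_add_mul_inner_eq_zero {d k : ℕ} {M : Matrix (Fin d) (Fin (k+1)) ℝ}
    {lam : ℝ} {c : EuclideanSpace ℝ (Fin (k+1))} (hc : IsRNACoeff M lam c)
    {v : EuclideanSpace ℝ (Fin (k+1))} (hv : ∑ i, v i = 0) :
    ⟪toEuclideanLin M c, toEuclideanLin M v⟫_ℝ + lam * ⟪c, v⟫_ℝ = 0 := by
  refine inner_map_add_mul_inner_eq_zero _ lam fun t ↦ hc.2 _ ?_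
  simp [Finset.sum_add_distrib, ← Finset.mul_sum, hv, hc.1]

theorem le_div_of_mul_sq_le_mul {x K lam : ℝ} (hlam : 0 < lam) (hK : 0 ≤ K) (hx : 0 ≤ x)
    (h : lam * x ^ 2 ≤ K * x) : x ≤ K / lam := by
  rw [le_div_iff₀ hlam]
  rcases hx.eq_or_lt with rfl | hx
  · simpa using hK
  · nlinarith

/-- Stability of the regularized extrapolation coefficients:
`‖c̃^λ − c^λ‖ ≤ (‖P‖/λ)·‖c^λ‖` where `P = RᵀR − R̃ᵀR̃`. -/
theorem rna_stability (d k : ℕ) (R Rt : Matrix (Fin d) (Fin (k+1)) ℝ)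
    (lam : ℝ) (hlam : 0 < lam)
    (c ct : EuclideanSpace ℝ (Fin (k+1)))
    (hc : IsRNACoeff R lam c) (hct : IsRNACoeff Rt lam ct)
    (P : Matrix (Fin (k+1)) (Fin (k+1)) ℝ) (hP : P = Rᵀ * R - Rtᵀ * Rt) :
    ‖ct - c‖ ≤ (opNorm P / lam) * ‖c‖ := by
  set δ := ct - c with hδ
  have hδsum : ∑ i, δ i = 0 := by simp [δ, Finset.sum_sub_distrib, hc.1, hct.1]
  have hR := hc.inner_add_mul_inner_eq_zero hδsum
  have hRt := hct.inner_add_mul_inner_eq_zero hδsum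
  rw [show ct = c + δ by rw [hδ, add_sub_cancel], map_add, inner_add_left, inner_add_left,
    real_inner_self_eq_norm_sq, real_inner_self_eq_norm_sq] at hRt
  have hPc : ⟪toEuclideanLin P c, δ⟫_ℝ =
      ⟪toEuclideanLin R c, toEuclideanLin R δ⟫_ℝ - ⟪toEuclideanLin Rt c, toEuclideanLin Rt δ⟫_ℝ := by
    simp only [inner_toEuclideanLin_toEuclideanLin, conjTranspose_eq_transpose_of_trivial, hP,
      map_sub, LinearMap.sub_apply, inner_sub_left]
  have hlower : lam * ‖δ‖ ^ 2 ≤ ⟪toEuclideanLin P c, δ⟫_ℝ := by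
    nlinarith [sq_nonneg ‖toEuclideanLin Rt δ‖]
  have hupper : ⟪toEuclideanLin P c, δ⟫_ℝ ≤ opNorm P * ‖c‖ * ‖δ‖ :=
    (real_inner_le_norm _ _).trans <| mul_le_mul_of_nonneg_right
      ((toEuclideanLin P).toContinuousLinearMap.le_opNorm c) (norm_nonneg δ)
  rw [div_mul_eq_mul_div]
  exact le_div_of_mul_sq_le_mul hlam (by unfold opNorm; positivity) (norm_nonneg δ)
    (hlower.trans hupper)
end

section
/- (Nonlinearity: norm of the coefficients.) Let R̃ ∈ ℝ^{d×(k+1)} and λ > 0, and let c̃^λ be the regularized extrapolation coefficients computed from R̃. Then ‖c̃^λ‖ ≤ √((‖R̃‖² + λ)/((k+1)λ)), and in particular ‖c̃^λ‖ ≤ (1/√(k+1))·√(1 + ‖R̃‖²/λ). -/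
/-!
The centroid `u = 𝟙/(k+1)` is feasible, so minimality of `c` gives
`λ‖c‖² ≤ ‖M c‖² + λ‖c‖² ≤ ‖M u‖² + λ‖u‖² ≤ (‖M‖² + λ)‖u‖² = (‖M‖² + λ)/(k+1)`.
-/

open Matrix

noncomputable def uniformWeights (n : ℕ) : EuclideanSpace ℝ (Fin n) :=
  WithLp.toLp 2 fun _ => 1 / (n : ℝ)

theorem sum_uniformWeights {n : ℕ} (hn : n ≠ 0) : ∑ i, uniformWeights n i = 1 := by
  simp [uniformWeights, hn]

theorem norm_uniformWeights_sq (n : ℕ) : ‖uniformWeights n‖ ^ 2 = 1 / n := by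
  rw [EuclideanSpace.norm_sq_eq]
  rcases eq_or_ne n 0 with rfl | -
  · simp
  simp [uniformWeights]
  field_simp

theorem mul_norm_sq_le_of_regularized_le {E F : Type*} [SeminormedAddCommGroup E]
    [SeminormedAddCommGroup F] [NormedSpace ℝ E] [NormedSpace ℝ F] (A : E →L[ℝ] F) {lam : ℝ}
    {c u : E} (h : ‖A c‖ ^ 2 + lam * ‖c‖ ^ 2 ≤ ‖A u‖ ^ 2 + lam * ‖u‖ ^ 2) :
    lam * ‖c‖ ^ 2 ≤ (‖A‖ ^ 2 + lam) * ‖u‖ ^ 2 := by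
  have hAu : ‖A u‖ ^ 2 ≤ ‖A‖ ^ 2 * ‖u‖ ^ 2 := by
    rw [← mul_pow]
    exact pow_le_pow_left₀ (norm_nonneg _) (A.le_opNorm u) 2
  nlinarith [sq_nonneg ‖A c‖]

theorem IsRNACoeff.mul_norm_sq_le {d k : ℕ} {M : Matrix (Fin d) (Fin (k + 1)) ℝ} {lam : ℝ}
    {c : EuclideanSpace ℝ (Fin (k + 1))} (hc : IsRNACoeff M lam c) :
    lam * ‖c‖ ^ 2 ≤ (opNorm M ^ 2 + lam) / (k + 1) := by
  have hmin := hc.2 _ (sum_uniformWeights k.succ_ne_zero)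
  have := mul_norm_sq_le_of_regularized_le (Matrix.toEuclideanLin M).toContinuousLinearMap hmin
  rwa [norm_uniformWeights_sq, Nat.cast_succ, mul_one_div] at this

theorem IsRNACoeff.norm_sq_le {d k : ℕ} {M : Matrix (Fin d) (Fin (k + 1)) ℝ} {lam : ℝ}
    (hlam : 0 < lam) {c : EuclideanSpace ℝ (Fin (k + 1))} (hc : IsRNACoeff M lam c) :
    ‖c‖ ^ 2 ≤ (opNorm M ^ 2 + lam) / ((k + 1) * lam) := by
  have h := hc.mul_norm_sq_le
  rw [le_div_iff₀ (by positivity)] at h ⊢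
  linarith

/-- Norm bound on the regularized extrapolation coefficients:
`‖c̃^λ‖ ≤ √((‖R̃‖² + λ)/((k+1)λ)) ≤ (1/√(k+1))·√(1 + ‖R̃‖²/λ)`. -/
theorem rna_coeff_norm_bound (d k : ℕ) (Rt : Matrix (Fin d) (Fin (k+1)) ℝ)
    (lam : ℝ) (hlam : 0 < lam)
    (ct : EuclideanSpace ℝ (Fin (k+1))) (hct : IsRNACoeff Rt lam ct) :
    ‖ct‖ ≤ Real.sqrt ((opNorm Rt ^ 2 + lam) / ((k + 1) * lam)) ∧
    ‖ct‖ ≤ (1 / Real.sqrt (k + 1)) * Real.sqrt (1 + opNorm Rt ^ 2 / lam) := by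
  have hbound : ‖ct‖ ≤ Real.sqrt ((opNorm Rt ^ 2 + lam) / ((k + 1) * lam)) :=
    Real.le_sqrt_of_sq_le (hct.norm_sq_le hlam)
  have hrewrite : (opNorm Rt ^ 2 + lam) / ((k + 1) * lam) = (1 + opNorm Rt ^ 2 / lam) / (k + 1) := by
    field_simp
    ring
  refine ⟨hbound, hbound.trans_eq ?_⟩
  rw [hrewrite, Real.sqrt_div' _ (by positivity : (0 : ℝ) ≤ k + 1)]
  ring
end

section
/- (Acceleration.) Fix κ ∈ (0,1), a symmetric matrix G ∈ ℝ^{d×d} with 0 ⪯ G ⪯ (1−κ)I, a point x* ∈ ℝ^d with x_0 ≠ x*, and iterates x_{t+1} = x* + G(x_t − x*) for t = 0,…,k. Let R ∈ ℝ^{d×(k+1)} have columns r_i = x_{i+1} − x_i, let λ > 0, let c^λ be the regularized extrapolation coefficients computed from R, and set λ̄ = λ/‖x_0 − x*‖². Then ‖Σ_{i=0}^{k} c^λ_i x_i − x*‖ ≤ (1/κ)·√( S_κ(k, λ̄)·‖x_0 − x*‖² − λ‖c^λ‖² ). -/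
/-!
Put `T = toEuclideanLin G` and `v = x₀ - x*`, so that `xₜ - x* = Tᵗ v`. For a coefficient vector
`c` with `𝟙ᵀc = 1` and `p_c = ∑ cᵢ Xⁱ`, the extrapolation error is `p_c(T) v` and the residual
combination is `R c = (T - 1) p_c(T) v`. In an eigenbasis of `T`, whose eigenvalues lie in
`[0, 1 - κ]`, this gives `κ ‖p_c(T) v‖ ≤ ‖R c‖` because `|μ - 1| ≥ κ`, and, because `|μ - 1| ≤ 1`,
`‖R c_q‖² ≤ max_{[0,1-κ]} q² · ‖v‖²` for the coefficient vector `c_q` of any admissible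
polynomial `q`. Minimality of `c^λ` against every `c_q` bounds `‖R c^λ‖² + λ‖c^λ‖²` by
`S_κ(k, λ̄) ‖v‖²`, and the two estimates combine to the claim.
-/

open Matrix Polynomial

/-- Value `S_κ(k, α)` of the regularized Chebyshev polynomial problem: the infimum over
polynomials `p` of degree at most `k` with `p(1) = 1` of
`(max_{x ∈ [0,1−κ]} p(x)²) + α · (sum of squared coefficients of p)`. -/
noncomputable def regChebyshev (κ : ℝ) (k : ℕ) (α : ℝ) : ℝ :=
  sInf { v : ℝ | ∃ p : Polynomial ℝ, p.natDegree ≤ k ∧ p.eval 1 = 1 ∧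
    v = sSup ((fun x : ℝ => (p.eval x) ^ 2) '' Set.Icc (0:ℝ) (1 - κ)) +
        α * ∑ i ∈ Finset.range (k+1), (p.coeff i) ^ 2 }

open Module Module.End

namespace Polynomial

variable {R M : Type*} [CommRing R] [AddCommGroup M] [Module R M]

theorem aeval_ofFn_apply [DecidableEq R] {n : ℕ} (T : Module.End R M) (c : Fin n → R) (v : M) :
    aeval T (ofFn n c) v = ∑ i, c i • (T ^ (i : ℕ)) v := by
  simp [ofFn_eq_sum_monomial, aeval_monomial, Module.algebraMap_end_apply]

theorem sum_toFn_eq_eval_one {n : ℕ} {q : R[X]} (hq : q.natDegree < n) :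
    ∑ i, toFn n q i = q.eval 1 := by
  simp [eval_eq_sum_range' hq, toFn, Fin.sum_univ_eq_sum_range (fun i ↦ q.coeff i)]

end Polynomial

section AffineIteration

variable {R M : Type*} [CommRing R] [AddCommGroup M] [Module R M]
  {T : Module.End R M} {x : ℕ → M} {xs : M} {k : ℕ}

theorem sub_eq_pow_apply_sub (hx : ∀ t ≤ k, x (t + 1) = xs + T (x t - xs)) :
    ∀ t ≤ k + 1, x t - xs = (T ^ t) (x 0 - xs)
  | 0, _ => by simp
  | t + 1, ht => by
    rw [hx t (by omega), add_sub_cancel_left, sub_eq_pow_apply_sub hx t (by omega), pow_succ',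
      Module.End.mul_apply]

theorem sum_smul_sub_eq_aeval_ofFn [DecidableEq R] (hx : ∀ t ≤ k, x (t + 1) = xs + T (x t - xs))
    {c : Fin (k + 1) → R} (hc : ∑ i, c i = 1) :
    ∑ i : Fin (k + 1), c i • x i - xs = aeval T (ofFn (k + 1) c) (x 0 - xs) := by
  calc ∑ i : Fin (k + 1), c i • x i - xs = ∑ i : Fin (k + 1), c i • (x i - xs) := by
        simp only [smul_sub, Finset.sum_sub_distrib, ← Finset.sum_smul, hc, one_smul]
    _ = aeval T (ofFn (k + 1) c) (x 0 - xs) := by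
        rw [aeval_ofFn_apply]
        exact Finset.sum_congr rfl fun i _ ↦ by rw [sub_eq_pow_apply_sub hx i (by omega)]

theorem sum_smul_succ_sub_eq_aeval [DecidableEq R] (hx : ∀ t ≤ k, x (t + 1) = xs + T (x t - xs))
    (c : Fin (k + 1) → R) :
    ∑ i : Fin (k + 1), c i • (x (i + 1) - x i) =
      aeval T ((X - 1) * ofFn (k + 1) c) (x 0 - xs) := by
  rw [map_mul, Module.End.mul_apply, aeval_ofFn_apply, map_sum]
  refine Finset.sum_congr rfl fun i _ ↦ ?_
  rw [map_smul, ← sub_sub_sub_cancel_right _ _ xs, sub_eq_pow_apply_sub hx (i + 1) (by omega),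
    sub_eq_pow_apply_sub hx i (by omega), pow_succ']
  simp

end AffineIteration

theorem Matrix.toEuclideanLin_apply_eq_sum_smul {𝕜 m n : Type*} [RCLike 𝕜] [Fintype n]
    [DecidableEq n] (A : Matrix m n 𝕜) (r : n → EuclideanSpace 𝕜 m)
    (hA : ∀ j i, A j i = r i j) (c : EuclideanSpace 𝕜 n) :
    toEuclideanLin A c = ∑ i, c i • r i := by
  ext j
  simp [Matrix.mulVec, dotProduct, hA, mul_comm]

namespace LinearMap

variable {E : Type*} [NormedAddCommGroup E] [InnerProductSpace ℝ E]

theorem eigenvalue_le_of_le_smul_one {T : E →ₗ[ℝ] E} {a μ : ℝ} (hT : T ≤ a • 1)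
    (hμ : HasEigenvalue T μ) : μ ≤ a := by
  obtain ⟨v, hv, hv0⟩ := hμ.exists_hasEigenvector
  have hTv : T v = μ • v := mem_eigenspace_iff.mp hv
  have hinner := hT.inner_nonneg_right v
  rw [sub_apply, smul_apply, Module.End.one_apply, hTv, ← sub_smul, real_inner_smul_right,
    real_inner_self_eq_norm_sq] at hinner
  have hpos : 0 < ‖v‖ ^ 2 := by positivity
  nlinarith

variable [FiniteDimensional ℝ E] {T : E →ₗ[ℝ] E}

namespace IsSymmetric

theorem eigenvectorBasis_repr_aeval (hT : T.IsSymmetric) {n : ℕ} (hn : finrank ℝ E = n)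
    (q : ℝ[X]) (v : E) (i : Fin n) :
    (hT.eigenvectorBasis hn).repr (aeval T q v) i =
      q.eval (hT.eigenvalues hn i) * (hT.eigenvectorBasis hn).repr v i := by
  induction q using Polynomial.induction_on' with
  | add p r hp hr => simp [hp, hr, add_mul]
  | monomial m a =>
    induction m generalizing v with
    | zero => simp [Algebra.algebraMap_eq_smul_one]
    | succ m ih =>
      rw [← monomial_mul_X, map_mul, Module.End.mul_apply, aeval_X, ih,
        hT.eigenvectorBasis_apply_self_apply, eval_mul_X, RCLike.ofReal_real_eq_id, id_eq]
      ring

theorem sq_norm_aeval_eq_sum (hT : T.IsSymmetric) {n : ℕ} (hn : finrank ℝ E = n)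
    (q : ℝ[X]) (v : E) :
    ‖aeval T q v‖ ^ 2 =
      ∑ i, q.eval (hT.eigenvalues hn i) ^ 2 * (hT.eigenvectorBasis hn).repr v i ^ 2 := by
  rw [← (hT.eigenvectorBasis hn).repr.norm_map, EuclideanSpace.norm_sq_eq]
  simp [eigenvectorBasis_repr_aeval, mul_pow]

theorem mul_sq_norm_aeval_le (hT : T.IsSymmetric) {p q : ℝ[X]} {a b : ℝ}
    (h : ∀ μ, HasEigenvalue T μ → a * p.eval μ ^ 2 ≤ b * q.eval μ ^ 2) (v : E) :
    a * ‖aeval T p v‖ ^ 2 ≤ b * ‖aeval T q v‖ ^ 2 := by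
  simp only [hT.sq_norm_aeval_eq_sum rfl, Finset.mul_sum, ← mul_assoc]
  exact Finset.sum_le_sum fun i _ ↦
    mul_le_mul_of_nonneg_right (h _ (hT.hasEigenvalue_eigenvalues rfl i)) (sq_nonneg _)

end IsSymmetric
end LinearMap

section SpectralBounds

variable {E : Type*} [NormedAddCommGroup E] [InnerProductSpace ℝ E] [FiniteDimensional ℝ E]
  {T : E →ₗ[ℝ] E} {κ : ℝ}

theorem sq_mul_sq_norm_aeval_le (hT : T.IsSymmetric) (hTκ : T ≤ (1 - κ) • 1) (hκ : 0 ≤ κ)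
    (p : ℝ[X]) (v : E) : κ ^ 2 * ‖aeval T p v‖ ^ 2 ≤ ‖aeval T ((X - 1) * p) v‖ ^ 2 := by
  simpa only [one_mul] using hT.mul_sq_norm_aeval_le (p := p) (q := (X - 1) * p) (b := 1)
    (fun μ hμ ↦ by
      have hμ1 := LinearMap.eigenvalue_le_of_le_smul_one hTκ hμ
      rw [one_mul, eval_mul, eval_sub, eval_X, eval_one, mul_pow]
      exact mul_le_mul_of_nonneg_right (by nlinarith) (sq_nonneg _)) v

theorem sq_norm_aeval_X_sub_one_mul_le (hT0 : 0 ≤ T) (hTκ : T ≤ (1 - κ) • 1) (hκ : 0 ≤ κ)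
    (q : ℝ[X]) (v : E) :
    ‖aeval T ((X - 1) * q) v‖ ^ 2 ≤
      sSup ((fun x ↦ q.eval x ^ 2) '' Set.Icc 0 (1 - κ)) * ‖v‖ ^ 2 := by
  have hT := (LinearMap.nonneg_iff_isPositive T).1 hT0
  have hbdd : BddAbove ((fun x ↦ q.eval x ^ 2) '' Set.Icc 0 (1 - κ)) :=
    (isCompact_Icc.image (q.continuous.pow 2)).bddAbove
  have h := hT.isSymmetric.mul_sq_norm_aeval_le (p := (X - 1) * q) (q := 1) (a := 1)
    (b := sSup ((fun x ↦ q.eval x ^ 2) '' Set.Icc 0 (1 - κ))) (fun μ hμ ↦ by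
      have hμ0 := eigenvalue_nonneg_of_nonneg hμ hT.re_inner_nonneg_right
      have hμ1 := LinearMap.eigenvalue_le_of_le_smul_one hTκ hμ
      have hle : q.eval μ ^ 2 ≤ _ := le_csSup hbdd ⟨μ, ⟨hμ0, hμ1⟩, rfl⟩
      have h1 : (μ - 1) ^ 2 ≤ 1 := by nlinarith
      rw [one_mul, eval_one, one_pow, mul_one, eval_mul, eval_sub, eval_X, eval_one, mul_pow]
      exact (mul_le_of_le_one_left (sq_nonneg _) h1).trans hle) v
  rwa [one_mul, map_one, Module.End.one_apply] at h

end SpectralBounds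

theorem le_regChebyshev {κ α a : ℝ} {k : ℕ}
    (h : ∀ q : ℝ[X], q.natDegree ≤ k → q.eval 1 = 1 →
      a ≤ sSup ((fun x ↦ q.eval x ^ 2) '' Set.Icc 0 (1 - κ)) +
        α * ∑ i ∈ Finset.range (k + 1), q.coeff i ^ 2) :
    a ≤ regChebyshev κ k α :=
  le_csInf ⟨_, 1, by simp, by simp, rfl⟩ fun _ ⟨q, hq, hq1, hv⟩ ↦ hv ▸ h q hq hq1

theorem IsRNACoeff.add_le_regChebyshev_mul {d k : ℕ} {A : Matrix (Fin d) (Fin (k + 1)) ℝ}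
    {lam κ : ℝ} {c : EuclideanSpace ℝ (Fin (k + 1))} (hc : IsRNACoeff A lam c)
    {T : EuclideanSpace ℝ (Fin d) →ₗ[ℝ] EuclideanSpace ℝ (Fin d)} (hT0 : 0 ≤ T)
    (hTκ : T ≤ (1 - κ) • 1) (hκ : 0 ≤ κ) {v : EuclideanSpace ℝ (Fin d)} (hv : v ≠ 0)
    (hA : ∀ c', toEuclideanLin A c' = aeval T ((X - 1) * ofFn (k + 1) c'.ofLp) v) :
    ‖toEuclideanLin A c‖ ^ 2 + lam * ‖c‖ ^ 2 ≤ regChebyshev κ k (lam / ‖v‖ ^ 2) * ‖v‖ ^ 2 := by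
  have hv2 : 0 < ‖v‖ ^ 2 := by positivity
  rw [← div_le_iff₀ hv2]
  refine le_regChebyshev fun q hq hq1 ↦ ?_
  rw [div_le_iff₀ hv2, add_mul, mul_right_comm, div_mul_cancel₀ _ hv2.ne']
  have hqk : q.natDegree < k + 1 := Nat.lt_succ_of_le hq
  set c' : EuclideanSpace ℝ (Fin (k + 1)) := WithLp.toLp 2 (toFn (k + 1) q)
  have hsum : ∑ i, c' i = 1 := (sum_toFn_eq_eval_one hqk).trans hq1
  have hnorm : ‖c'‖ ^ 2 = ∑ i ∈ Finset.range (k + 1), q.coeff i ^ 2 := by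
    simp [EuclideanSpace.norm_sq_eq, c', toFn, Fin.sum_univ_eq_sum_range (fun i ↦ q.coeff i ^ 2)]
  have hres : ‖toEuclideanLin A c'‖ ^ 2 ≤
      sSup ((fun x ↦ q.eval x ^ 2) '' Set.Icc 0 (1 - κ)) * ‖v‖ ^ 2 := by
    rw [hA, WithLp.ofLp_toLp, ofFn_comp_toFn_eq_id_of_natDegree_lt hqk]
    exact sq_norm_aeval_X_sub_one_mul_le hT0 hTκ hκ q v
  calc ‖toEuclideanLin A c‖ ^ 2 + lam * ‖c‖ ^ 2
      ≤ ‖toEuclideanLin A c'‖ ^ 2 + lam * ‖c'‖ ^ 2 := hc.2 c' hsum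
    _ ≤ _ := by rw [hnorm]; linarith

theorem rna_acceleration_bound_general (d k : ℕ) (κ : ℝ) (hκ : κ ∈ Set.Ioo (0:ℝ) 1)
    (G : Matrix (Fin d) (Fin d) ℝ)
    (hG0 : G.PosSemidef)
    (hG1 : ((1 - κ) • (1 : Matrix (Fin d) (Fin d) ℝ) - G).PosSemidef)
    (xs : EuclideanSpace ℝ (Fin d)) (x : ℕ → EuclideanSpace ℝ (Fin d))
    (hne : x 0 ≠ xs)
    (hx : ∀ t ≤ k, x (t+1) = xs + Matrix.toEuclideanLin G (x t - xs))
    (R : Matrix (Fin d) (Fin (k+1)) ℝ)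
    (hR : ∀ (j : Fin d) (i : Fin (k+1)), R j i = (x (i+1) - x i) j)
    (lam : ℝ)
    (c : EuclideanSpace ℝ (Fin (k+1))) (hc : IsRNACoeff R lam c) :
    ‖(∑ i : Fin (k+1), c i • x i) - xs‖ ≤
      (1/κ) * Real.sqrt (regChebyshev κ k (lam / ‖x 0 - xs‖ ^ 2) * ‖x 0 - xs‖ ^ 2
        - lam * ‖c‖ ^ 2) := by
  set T := toEuclideanLin G
  have hT : T.IsPositive := isPositive_toEuclideanLin_iff.2 hG0
  have hT0 : 0 ≤ T := (LinearMap.nonneg_iff_isPositive T).2 hT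
  have hTκ : T ≤ (1 - κ) • 1 := by
    rw [LinearMap.le_def]
    simpa [T, Module.End.one_eq_id] using isPositive_toEuclideanLin_iff.2 hG1
  have hres (c' : EuclideanSpace ℝ (Fin (k + 1))) :
      toEuclideanLin R c' = aeval T ((X - 1) * ofFn (k + 1) c'.ofLp) (x 0 - xs) :=
    (toEuclideanLin_apply_eq_sum_smul R _ hR c').trans (sum_smul_succ_sub_eq_aeval hx c')
  have hlower : κ ^ 2 * ‖∑ i : Fin (k + 1), c i • x i - xs‖ ^ 2 ≤ ‖toEuclideanLin R c‖ ^ 2 := by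
    rw [hres, sum_smul_sub_eq_aeval_ofFn hx hc.1]
    exact sq_mul_sq_norm_aeval_le hT.isSymmetric hTκ hκ.1.le _ _
  have hupper := hc.add_le_regChebyshev_mul hT0 hTκ hκ.1.le (sub_ne_zero.2 hne) hres
  rw [one_div, ← div_eq_inv_mul, le_div_iff₀ hκ.1]
  apply Real.le_sqrt_of_sq_le
  linarith [mul_pow ‖∑ i : Fin (k + 1), c i • x i - xs‖ κ 2]

/-- Acceleration bound: the extrapolation with the regularized coefficients computed from
the residual matrix `R` of the linearized iterates satisfies
`‖Σᵢ c^λ_i xᵢ − x*‖ ≤ (1/κ)·√(S_κ(k, λ̄)·‖x₀ − x*‖² − λ‖c^λ‖²)` with `λ̄ = λ/‖x₀ − x*‖²`. -/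
theorem rna_acceleration_bound (d k : ℕ) (κ : ℝ) (hκ : κ ∈ Set.Ioo (0:ℝ) 1)
    (G : Matrix (Fin d) (Fin d) ℝ) (hGsymm : G.IsSymm)
    (hG0 : G.PosSemidef)
    (hG1 : ((1 - κ) • (1 : Matrix (Fin d) (Fin d) ℝ) - G).PosSemidef)
    (xs : EuclideanSpace ℝ (Fin d)) (x : ℕ → EuclideanSpace ℝ (Fin d))
    (hne : x 0 ≠ xs)
    (hx : ∀ t ≤ k, x (t+1) = xs + Matrix.toEuclideanLin G (x t - xs))
    (R : Matrix (Fin d) (Fin (k+1)) ℝ)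
    (hR : ∀ (j : Fin d) (i : Fin (k+1)), R j i = (x (i+1) - x i) j)
    (lam : ℝ) (hlam : 0 < lam)
    (c : EuclideanSpace ℝ (Fin (k+1))) (hc : IsRNACoeff R lam c) :
    ‖(∑ i : Fin (k+1), c i • x i) - xs‖ ≤
      (1/κ) * Real.sqrt (regChebyshev κ k (lam / ‖x 0 - xs‖ ^ 2) * ‖x 0 - xs‖ ^ 2
        - lam * ‖c‖ ^ 2) :=
  rna_acceleration_bound_general d k κ hκ G hG0 hG1 xs x hne hx R hR lam c hc
end

section
/- (Explicit deterministic convergence bound for RNA.) Fix κ ∈ (0,1), a symmetric matrix G ∈ ℝ^{d×d} with 0 ⪯ G ⪯ (1−κ)I, x* ∈ ℝ^d, x_0 ≠ x*, and noiseless iterates x_{t+1} = x* + G(x_t − x*) for t = 0,…,k. Let x̃_0 = x_0, x̃_1, …, x̃_{k+1} ∈ ℝ^d be arbitrary, let R and R̃ be the matrices of residuals of (x_t) and (x̃_t) respectively, let E ∈ ℝ^{d×(k+1)} have columns x_i − x̃_i, let P = RᵀR − R̃ᵀR̃, let λ > 0, let c̃^λ be the regularized extrapolation coefficients computed from R̃,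 and set λ̄ = λ/‖x_0 − x*‖². Then ‖Σ_{i=0}^{k} c̃^λ_i x̃_i − x*‖ ≤ ‖x_0 − x*‖·√(S_κ(k, λ̄))·√( 1/κ² + (k+1)‖x_0 − x*‖²‖P‖²/λ³ ) + (‖E‖/√(k+1))·√(1 + ‖R̃‖²/λ). -/
open Matrix Polynomial

open scoped RealInnerProductSpace
open Filter

/-!
Write `z = x₀ - x*` and `p_c = ∑ cᵢ Xⁱ` for a coefficient vector `c`. As `xᵢ - x* = Gⁱ z`,
the combination `∑ cᵢ xᵢ - x*` is `p_c(G) z` and `R c = (G - 1) p_c(G) z`. Let `c` be the exact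
coefficients of `R`. Testing its regularized objective `‖R c‖² + λ‖c‖²` against the coefficients
of each admissible polynomial, and bounding polynomials of `G` on its spectrum `⊆ [0, 1 - κ]`,
bounds it by `‖z‖² S_κ(k, λ/‖z‖²)`. The first-order conditions of the two problems give the
stability bound `λ‖c̃ - c‖ ≤ ‖P‖‖c‖`. Since `‖(G - 1) w‖ ≥ κ‖w‖`, `‖p_c(G) z‖ ≤ ‖R c‖ / κ`, while
`‖p_{c̃ - c}(G) z‖ ≤ √(k+1) ‖c̃ - c‖ ‖z‖`; Cauchy–Schwarz in `ℝ²` combines these with the objective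
bound. Finally `∑ c̃ᵢ x̃ᵢ - x* = p_c̃(G) z - E c̃`, and comparing `c̃` with the uniform vector gives
`‖c̃‖² ≤ (1 + ‖R̃‖²/λ)/(k+1)`.
-/

section RegularizedLeastSquares

variable {V W W' : Type*} [NormedAddCommGroup V] [InnerProductSpace ℝ V]
  [NormedAddCommGroup W] [InnerProductSpace ℝ W] [NormedAddCommGroup W'] [InnerProductSpace ℝ W']

def regObjective (A : V →ₗ[ℝ] W) (lam : ℝ) (c : V) : ℝ := ‖A c‖ ^ 2 + lam * ‖c‖ ^ 2

lemma regObjective_add_smul (A : V →ₗ[ℝ] W) (lam : ℝ) (c v : V) (t : ℝ) :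
    regObjective A lam (c + t • v) = regObjective A lam c +
      2 * t * (⟪A c, A v⟫ + lam * ⟪c, v⟫) + t ^ 2 * regObjective A lam v := by
  simp only [regObjective, map_add, map_smul, norm_add_sq_real, norm_smul, inner_smul_right,
    Real.norm_eq_abs, mul_pow, sq_abs]
  ring

lemma inner_add_inner_eq_zero_of_isMinOn {A : V →ₗ[ℝ] W} {lam : ℝ} {ℓ : V →ₗ[ℝ] ℝ} {c v : V}
    (hmin : IsMinOn (regObjective A lam) {c | ℓ c = 1} c) (hc : ℓ c = 1) (hv : ℓ v = 0) :
    ⟪A c, A v⟫ + lam * ⟪c, v⟫ = 0 := by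
  set b := ⟪A c, A v⟫ + lam * ⟪c, v⟫
  have hquad : ∀ t : ℝ, 0 ≤ regObjective A lam v * (t * t) + 2 * b * t + 0 := fun t => by
    have := isMinOn_iff.mp hmin (c + t • v) (by simp [hc, hv])
    rw [regObjective_add_smul] at this
    linarith
  have : (2 * b) ^ 2 ≤ 0 := by simpa [discrim] using discrim_le_zero hquad
  nlinarith [sq_nonneg b]

lemma exists_isMinOn_regObjective [FiniteDimensional ℝ V] (A : V →ₗ[ℝ] W) {lam : ℝ}
    (hlam : 0 < lam) {s : Set V} (hs : IsClosed s) (hne : s.Nonempty) :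
    ∃ c ∈ s, IsMinOn (regObjective A lam) s c := by
  obtain ⟨c₀, hc₀⟩ := hne
  have hA := A.continuous_of_finiteDimensional
  have hcont : Continuous (regObjective A lam) := by unfold regObjective; fun_prop
  refine hcont.continuousOn.exists_isMinOn' hs hc₀ (Eventually.filter_mono inf_le_left ?_)
  have hcoercive : Tendsto (fun c : V => lam * ‖c‖ ^ 2) (cocompact V) atTop :=
    ((tendsto_pow_atTop two_ne_zero).comp tendsto_norm_cocompact_atTop).const_mul_atTop hlam
  filter_upwards [hcoercive.eventually_ge_atTop (regObjective A lam c₀)] with c hc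
  unfold regObjective at hc ⊢
  nlinarith [sq_nonneg ‖A c‖]

lemma regObjective_sub_eq_of_isMinOn {A : V →ₗ[ℝ] W} {A' : V →ₗ[ℝ] W'} {lam : ℝ}
    {ℓ : V →ₗ[ℝ] ℝ} {c c' : V}
    (hc : ℓ c = 1) (hmin : IsMinOn (regObjective A lam) {c | ℓ c = 1} c)
    (hc' : ℓ c' = 1) (hmin' : IsMinOn (regObjective A' lam) {c | ℓ c = 1} c') :
    regObjective A' lam (c' - c) = ⟪A c, A (c' - c)⟫ - ⟪A' c, A' (c' - c)⟫ := by
  have hdir : ℓ (c' - c) = 0 := by simp [hc, hc']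
  have h := inner_add_inner_eq_zero_of_isMinOn hmin hc hdir
  have h' := inner_add_inner_eq_zero_of_isMinOn hmin' hc' hdir
  rw [regObjective, ← real_inner_self_eq_norm_sq, ← real_inner_self_eq_norm_sq]
  simp only [map_sub, inner_sub_left] at h h' ⊢
  linarith

end RegularizedLeastSquares

noncomputable def coordSum (ι : Type*) [Fintype ι] : EuclideanSpace ℝ ι →ₗ[ℝ] ℝ :=
  (∑ i, EuclideanSpace.proj i : StrongDual ℝ (EuclideanSpace ℝ ι)).toLinearMap

@[simp]
lemma coordSum_apply {ι : Type*} [Fintype ι] (c : EuclideanSpace ℝ ι) :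
    coordSum ι c = ∑ i, c i := by
  simp [coordSum]

section Matrix

variable {d d' n k : ℕ}

lemma Matrix.PosSemidef.toEuclideanLin_nonneg {G : Matrix (Fin d) (Fin d) ℝ} (hG : G.PosSemidef) :
    0 ≤ toEuclideanLin G :=
  (LinearMap.nonneg_iff_isPositive _).mpr (isPositive_toEuclideanLin_iff.mpr hG)

lemma toEuclideanLin_le_smul_one {G : Matrix (Fin d) (Fin d) ℝ} {a : ℝ}
    (hG : (a • (1 : Matrix (Fin d) (Fin d) ℝ) - G).PosSemidef) : toEuclideanLin G ≤ a • 1 := by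
  have := isPositive_toEuclideanLin_iff.mpr hG
  rwa [map_sub, map_smul, show toEuclideanLin (1 : Matrix (Fin d) (Fin d) ℝ) = 1 by ext; simp]
    at this

lemma norm_toEuclideanLin_apply_le (M : Matrix (Fin d) (Fin n) ℝ) (v : EuclideanSpace ℝ (Fin n)) :
    ‖toEuclideanLin M v‖ ≤ opNorm M * ‖v‖ :=
  (toEuclideanLin M).toContinuousLinearMap.le_opNorm v

lemma inner_toEuclideanLin_toEuclideanLin (M : Matrix (Fin d) (Fin n) ℝ)
    (a b : EuclideanSpace ℝ (Fin n)) :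
    ⟪toEuclideanLin M a, toEuclideanLin M b⟫ = ⟪a, toEuclideanLin (Mᵀ * M) b⟫ := by
  rw [← conjTranspose_eq_transpose_of_trivial, toLpLin_mul 2 2 2,
    toEuclideanLin_conjTranspose_eq_adjoint]
  exact (LinearMap.adjoint_inner_right _ _ _).symm

lemma toEuclideanLin_apply_eq_sum {M : Matrix (Fin d) (Fin n) ℝ}
    {v : Fin n → EuclideanSpace ℝ (Fin d)} (hM : ∀ j i, M j i = v i j)
    (c : EuclideanSpace ℝ (Fin n)) : toEuclideanLin M c = ∑ i, c i • v i := by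
  ext j
  simp [ofLp_toLpLin, mulVec, dotProduct, hM, mul_comm]

lemma isRNACoeff_iff {M : Matrix (Fin d) (Fin (k + 1)) ℝ} {lam : ℝ}
    {c : EuclideanSpace ℝ (Fin (k + 1))} :
    IsRNACoeff M lam c ↔ coordSum _ c = 1 ∧
      IsMinOn (regObjective (toEuclideanLin M) lam) {c | coordSum _ c = 1} c := by
  simp [IsRNACoeff, regObjective, isMinOn_iff]

lemma exists_isRNACoeff (M : Matrix (Fin d) (Fin (k + 1)) ℝ) {lam : ℝ} (hlam : 0 < lam) :
    ∃ c, IsRNACoeff M lam c := by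
  obtain ⟨c, hc, hmin⟩ := exists_isMinOn_regObjective (toEuclideanLin M) hlam
    (isClosed_eq (coordSum _).continuous_of_finiteDimensional continuous_const)
    ⟨EuclideanSpace.single 0 1, show coordSum _ _ = 1 by simp⟩
  exact ⟨c, isRNACoeff_iff.mpr ⟨hc, hmin⟩⟩

lemma IsRNACoeff.mul_norm_sub_le {M : Matrix (Fin d) (Fin (k + 1)) ℝ}
    {M' : Matrix (Fin d') (Fin (k + 1)) ℝ} {lam : ℝ} {c c' : EuclideanSpace ℝ (Fin (k + 1))}
    (hc : IsRNACoeff M lam c) (hc' : IsRNACoeff M' lam c') :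
    lam * ‖c' - c‖ ≤ opNorm (Mᵀ * M - M'ᵀ * M') * ‖c‖ := by
  obtain ⟨hc1, hmin⟩ := isRNACoeff_iff.mp hc
  obtain ⟨hc1', hmin'⟩ := isRNACoeff_iff.mp hc'
  have h := regObjective_sub_eq_of_isMinOn hc1 hmin hc1' hmin'
  rw [inner_toEuclideanLin_toEuclideanLin, inner_toEuclideanLin_toEuclideanLin, ← inner_sub_right,
    ← LinearMap.sub_apply, ← map_sub] at h
  have hsq : lam * ‖c' - c‖ ^ 2 ≤ opNorm (Mᵀ * M - M'ᵀ * M') * ‖c‖ * ‖c' - c‖ := by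
    calc lam * ‖c' - c‖ ^ 2 ≤ regObjective (toEuclideanLin M') lam (c' - c) := by
          rw [regObjective]; nlinarith [sq_nonneg ‖toEuclideanLin M' (c' - c)‖]
      _ ≤ ‖c‖ * ‖toEuclideanLin (Mᵀ * M - M'ᵀ * M') (c' - c)‖ := h ▸ real_inner_le_norm _ _
      _ ≤ ‖c‖ * (opNorm (Mᵀ * M - M'ᵀ * M') * ‖c' - c‖) := by
          gcongr; exact norm_toEuclideanLin_apply_le _ _
      _ = _ := by ring
  rcases (norm_nonneg (c' - c)).eq_or_lt with h0 | hpos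
  · rw [← h0, mul_zero]
    exact mul_nonneg (norm_nonneg _) (norm_nonneg _)
  · rw [sq] at hsq
    nlinarith

lemma IsRNACoeff.norm_le {M : Matrix (Fin d) (Fin (k + 1)) ℝ} {lam : ℝ}
    {c : EuclideanSpace ℝ (Fin (k + 1))} (hc : IsRNACoeff M lam c) (hlam : 0 < lam) :
    ‖c‖ ≤ √(1 + opNorm M ^ 2 / lam) / √(k + 1) := by
  set u : EuclideanSpace ℝ (Fin (k + 1)) := WithLp.toLp 2 fun _ => ((k : ℝ) + 1)⁻¹
  have hu1 : ∑ i, u i = 1 := by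
    simp only [u, Finset.sum_const, Finset.card_univ, Fintype.card_fin, nsmul_eq_mul,
      Nat.cast_add_one]
    field_simp
  have hu : ‖u‖ ^ 2 = ((k : ℝ) + 1)⁻¹ := by
    simp only [EuclideanSpace.real_norm_sq_eq, u, inv_pow, Finset.sum_const, Finset.card_univ,
      Fintype.card_fin, nsmul_eq_mul, Nat.cast_add_one]
    field_simp
  have hMu : ‖toEuclideanLin M u‖ ^ 2 ≤ opNorm M ^ 2 * ‖u‖ ^ 2 := by
    rw [← mul_pow]; gcongr; exact norm_toEuclideanLin_apply_le M u
  have hmin := hc.2 u hu1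
  rw [hu] at hMu hmin
  have hlamc : lam * ‖c‖ ^ 2 ≤ (opNorm M ^ 2 + lam) * ((k : ℝ) + 1)⁻¹ := by
    nlinarith [sq_nonneg ‖toEuclideanLin M c‖]
  rw [← Real.sqrt_div' _ (by positivity), ← Real.sqrt_sq (norm_nonneg c)]
  gcongr
  rw [one_add_div hlam.ne', div_div, le_div_iff₀ (by positivity)]
  field_simp at hlamc
  linarith

end Matrix

lemma Polynomial.eval_ofFn {R : Type*} [CommSemiring R] [DecidableEq R] {n : ℕ} (v : Fin n → R)
    (x : R) : (ofFn n v).eval x = ∑ i, v i * x ^ (i : ℕ) := by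
  simp [ofFn_eq_sum_monomial, eval_finsetSum]

lemma Polynomial.aeval_ofFn {R A : Type*} [CommSemiring R] [DecidableEq R] [Semiring A]
    [Algebra R A] {n : ℕ} (v : Fin n → R) (a : A) :
    aeval a (ofFn n v) = ∑ i, v i • a ^ (i : ℕ) := by
  simp [ofFn_eq_sum_monomial, aeval_monomial, Algebra.smul_def]

lemma EuclideanSpace.sum_abs_le_sqrt_card_mul_norm {n : ℕ} (c : EuclideanSpace ℝ (Fin n)) :
    ∑ i, |c i| ≤ √n * ‖c‖ := by
  simpa [EuclideanSpace.norm_eq] using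
    Real.sum_mul_le_sqrt_mul_sqrt Finset.univ (fun _ => (1 : ℝ)) (fun i => |c i|)

lemma EuclideanSpace.norm_toLp_mul_le {ι : Type*} [Fintype ι] {w : ι → ℝ} {B : ℝ} (hB : 0 ≤ B)
    (hw : ∀ i, |w i| ≤ B) (x : EuclideanSpace ℝ ι) :
    ‖WithLp.toLp 2 (fun i => w i * x i)‖ ≤ B * ‖x‖ := by
  refine (sq_le_sq₀ (norm_nonneg _) (by positivity)).mp ?_
  rw [mul_pow, EuclideanSpace.real_norm_sq_eq, EuclideanSpace.real_norm_sq_eq, Finset.mul_sum]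
  refine Finset.sum_le_sum fun i _ => ?_
  rw [mul_pow]
  exact mul_le_mul_of_nonneg_right (sq_le_sq' (abs_le.mp (hw i)).1 (abs_le.mp (hw i)).2)
    (sq_nonneg _)

section Spectral

variable {E : Type*} [NormedAddCommGroup E] [InnerProductSpace ℝ E] {T : Module.End ℝ E} {κ : ℝ}

lemma Module.End.HasEigenvalue.mem_Icc {μ a : ℝ} (hT0 : 0 ≤ T) (hTa : T ≤ a • 1)
    (hμ : T.HasEigenvalue μ) : μ ∈ Set.Icc 0 a := by
  obtain ⟨v, hv⟩ := hμ.exists_hasEigenvector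
  have hTv : ⟪T v, v⟫ = μ * ‖v‖ ^ 2 := by
    rw [hv.apply_eq_smul, real_inner_smul_left, real_inner_self_eq_norm_sq]
  have hlow := ((LinearMap.nonneg_iff_isPositive T).mp hT0).inner_nonneg_left v
  have hup := ((LinearMap.le_def T (a • 1)).mp hTa).inner_nonneg_left v
  rw [LinearMap.sub_apply, inner_sub_left, LinearMap.smul_apply, Module.End.one_apply,
    real_inner_smul_left, real_inner_self_eq_norm_sq] at hup
  have hv0 : 0 < ‖v‖ ^ 2 := pow_pos (norm_pos_iff.mpr hv.2) 2
  constructor <;> nlinarith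

lemma mul_norm_le_norm_sub_one_apply (hT : T ≤ (1 - κ) • 1) (w : E) :
    κ * ‖w‖ ≤ ‖(T - 1) w‖ := by
  have hpos := ((LinearMap.le_def T _).mp hT).inner_nonneg_left w
  have hcs := real_inner_le_norm (w - T w) w
  rw [show (T - 1) w = -(w - T w) by simp, norm_neg]
  simp only [LinearMap.sub_apply, LinearMap.smul_apply, Module.End.one_apply, inner_sub_left,
    real_inner_smul_left, real_inner_self_eq_norm_sq] at hpos hcs
  rcases (norm_nonneg w).eq_or_lt with hw | hw
  · rw [← hw]; simp
  · nlinarith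

variable [FiniteDimensional ℝ E]

lemma LinearMap.IsSymmetric.norm_aeval_apply_le (hT : T.IsSymmetric)
    {p : ℝ[X]} {B : ℝ} (hB : 0 ≤ B) (hp : ∀ μ, T.HasEigenvalue μ → |p.eval μ| ≤ B) (v : E) :
    ‖aeval T p v‖ ≤ B * ‖v‖ := by
  set b := hT.eigenvectorBasis rfl
  set μ := hT.eigenvalues rfl
  have hdiag : aeval T p v = b.repr.symm (WithLp.toLp 2 fun i => p.eval (μ i) * b.repr v i) := by
    conv_lhs => rw [← b.sum_repr v]
    simp only [map_sum, map_smul, ← b.sum_repr_symm]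
    refine Finset.sum_congr rfl fun i _ => ?_
    rw [Module.End.aeval_apply_of_hasEigenvector (hT.hasEigenvector_eigenvectorBasis rfl i),
      smul_smul, mul_comm]
    rfl
  rw [hdiag, LinearIsometryEquiv.norm_map, ← b.repr.norm_map v]
  exact EuclideanSpace.norm_toLp_mul_le hB (fun i => hp _ (hT.hasEigenvalue_eigenvalues rfl i)) _

lemma norm_aeval_ofFn_apply_le (hκ : 0 ≤ κ) (hT0 : 0 ≤ T) (hT1 : T ≤ (1 - κ) • 1) {n : ℕ}
    (c : EuclideanSpace ℝ (Fin n)) (z : E) :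
    ‖aeval T (ofFn n c.ofLp) z‖ ≤ √n * ‖c‖ * ‖z‖ := by
  have hT := ((LinearMap.nonneg_iff_isPositive T).mp hT0).isSymmetric
  refine (hT.norm_aeval_apply_le (by positivity) (fun μ hμ => ?_) z).trans
    (mul_le_mul_of_nonneg_right (EuclideanSpace.sum_abs_le_sqrt_card_mul_norm c) (norm_nonneg z))
  obtain ⟨hμ0, hμ1⟩ := hμ.mem_Icc hT0 hT1
  rw [eval_ofFn]
  refine (Finset.abs_sum_le_sum_abs _ _).trans (Finset.sum_le_sum fun i _ => ?_)
  rw [abs_mul, abs_pow, abs_of_nonneg hμ0]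
  exact mul_le_of_le_one_right (abs_nonneg _) (pow_le_one₀ hμ0 (by linarith))

lemma norm_sub_one_aeval_apply_le (hκ : 0 ≤ κ) (hT0 : 0 ≤ T) (hT1 : T ≤ (1 - κ) • 1)
    {p : ℝ[X]} {B : ℝ} (hB : 0 ≤ B) (hp : ∀ x ∈ Set.Icc 0 (1 - κ), |p.eval x| ≤ B) (z : E) :
    ‖(T - 1) (aeval T p z)‖ ≤ B * ‖z‖ := by
  have hT := ((LinearMap.nonneg_iff_isPositive T).mp hT0).isSymmetric
  rw [show (T - 1) (aeval T p z) = aeval T ((X - 1) * p) z by simp]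
  refine hT.norm_aeval_apply_le hB (fun μ hμ => ?_) z
  obtain ⟨hμ0, hμ1⟩ := hμ.mem_Icc hT0 hT1
  have hX : |(X - 1 : ℝ[X]).eval μ| ≤ 1 := by
    simp only [eval_sub, eval_X, eval_one, abs_le]
    constructor <;> linarith
  rw [eval_mul, abs_mul]
  exact (mul_le_mul hX (hp μ ⟨hμ0, hμ1⟩) (abs_nonneg _) zero_le_one).trans_eq (one_mul B)

lemma regObjective_le_mul_regChebyshev (hκ : 0 ≤ κ) (hT0 : 0 ≤ T) (hT1 : T ≤ (1 - κ) • 1)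
    {k : ℕ} {z : E} (hz : z ≠ 0) {A : EuclideanSpace ℝ (Fin (k + 1)) →ₗ[ℝ] E}
    (hA : ∀ c, A c = (T - 1) (aeval T (ofFn (k + 1) c.ofLp) z)) {lam : ℝ}
    {c : EuclideanSpace ℝ (Fin (k + 1))}
    (hmin : IsMinOn (regObjective A lam) {c | coordSum _ c = 1} c) :
    regObjective A lam c ≤ ‖z‖ ^ 2 * regChebyshev κ k (lam / ‖z‖ ^ 2) := by
  have hz2 : 0 < ‖z‖ ^ 2 := by positivity
  rw [← div_le_iff₀' hz2]
  refine le_csInf ⟨_, 1, by simp, by simp, rfl⟩ ?_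
  rintro _ ⟨p, hdeg, hp1, rfl⟩
  set m := sSup ((fun x => p.eval x ^ 2) '' Set.Icc 0 (1 - κ))
  have hm : ∀ x ∈ Set.Icc 0 (1 - κ), p.eval x ^ 2 ≤ m := fun x hx =>
    le_csSup (isCompact_Icc.image (by fun_prop)).bddAbove ⟨x, hx, rfl⟩
  set cp : EuclideanSpace ℝ (Fin (k + 1)) := WithLp.toLp 2 (toFn (k + 1) p)
  have hofFn : ofFn (k + 1) cp.ofLp = p := ofFn_comp_toFn_eq_id_of_natDegree_lt (by omega)
  have hcp1 : coordSum _ cp = 1 := by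
    rw [← hp1, ← hofFn, eval_ofFn]
    simp
  have hcp : ‖cp‖ ^ 2 = ∑ i ∈ Finset.range (k + 1), p.coeff i ^ 2 := by
    rw [EuclideanSpace.real_norm_sq_eq, ← Fin.sum_univ_eq_sum_range (fun i => p.coeff i ^ 2)]
    rfl
  have hAcp : ‖A cp‖ ^ 2 ≤ m * ‖z‖ ^ 2 := by
    have hm0 : 0 ≤ m := Real.sSup_nonneg (by rintro _ ⟨x, -, rfl⟩; positivity)
    have hbound : ‖A cp‖ ≤ √m * ‖z‖ := by
      rw [hA, hofFn]
      refine norm_sub_one_aeval_apply_le hκ hT0 hT1 (Real.sqrt_nonneg m) (fun x hx => ?_) z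
      rw [← Real.sqrt_sq_eq_abs]
      exact Real.sqrt_le_sqrt (hm x hx)
    calc ‖A cp‖ ^ 2 ≤ (√m * ‖z‖) ^ 2 := by gcongr
      _ = m * ‖z‖ ^ 2 := by rw [mul_pow, Real.sq_sqrt hm0]
  calc regObjective A lam c / ‖z‖ ^ 2 ≤ regObjective A lam cp / ‖z‖ ^ 2 := by
        gcongr; exact hmin hcp1
    _ ≤ m + lam / ‖z‖ ^ 2 * ∑ i ∈ Finset.range (k + 1), p.coeff i ^ 2 := by
        rw [regObjective, hcp, div_le_iff₀ hz2, add_mul, div_mul_eq_mul_div,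
          div_mul_cancel₀ _ hz2.ne']
        linarith

lemma norm_aeval_ofFn_apply_le_of_isMinOn (hκ : 0 < κ) (hT0 : 0 ≤ T) (hT1 : T ≤ (1 - κ) • 1)
    {k : ℕ} (z : E) {A : EuclideanSpace ℝ (Fin (k + 1)) →ₗ[ℝ] E}
    (hA : ∀ c, A c = (T - 1) (aeval T (ofFn (k + 1) c.ofLp) z)) {lam : ℝ} (hlam : 0 < lam)
    {c c' : EuclideanSpace ℝ (Fin (k + 1))}
    (hmin : IsMinOn (regObjective A lam) {c | coordSum _ c = 1} c) {ρ : ℝ}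
    (hc' : lam * ‖c' - c‖ ≤ ρ * ‖c‖) :
    ‖aeval T (ofFn (k + 1) c'.ofLp) z‖ ≤ ‖z‖ * √(regChebyshev κ k (lam / ‖z‖ ^ 2)) *
      √(1 / κ ^ 2 + (k + 1) * ‖z‖ ^ 2 * ρ ^ 2 / lam ^ 3) := by
  rcases eq_or_ne z 0 with rfl | hz
  · simp
  set a := ‖A c‖
  set b := √lam * ‖c‖
  set q := √(k + 1) * ‖z‖ * ρ / (lam * √lam)
  have hexact : ‖aeval T (ofFn (k + 1) c.ofLp) z‖ ≤ κ⁻¹ * a := by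
    rw [inv_mul_eq_div, le_div_iff₀' hκ, show a = ‖A c‖ from rfl, hA]
    exact mul_norm_le_norm_sub_one_apply hT1 _
  have hpert : ‖aeval T (ofFn (k + 1) (c' - c).ofLp) z‖ ≤ q * b := by
    have hqb : q * b = √(k + 1) * (ρ * ‖c‖ / lam) * ‖z‖ := by
      have := Real.sqrt_pos.mpr hlam
      simp only [q, b]
      field_simp
    refine (norm_aeval_ofFn_apply_le hκ.le hT0 hT1 _ z).trans ?_
    rw [hqb, Nat.cast_add_one]
    gcongr
    rwa [le_div_iff₀' hlam]
  have hopt : a ^ 2 + b ^ 2 ≤ ‖z‖ ^ 2 * regChebyshev κ k (lam / ‖z‖ ^ 2) := by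
    simpa [regObjective, b, mul_pow, Real.sq_sqrt hlam.le] using
      regObjective_le_mul_regChebyshev hκ.le hT0 hT1 hz hA hmin
  have hq : q ^ 2 = (k + 1) * ‖z‖ ^ 2 * ρ ^ 2 / lam ^ 3 := by
    rw [div_pow, mul_pow, mul_pow, mul_pow, Real.sq_sqrt (by positivity), Real.sq_sqrt hlam.le]
    ring
  calc ‖aeval T (ofFn (k + 1) c'.ofLp) z‖ ≤ κ⁻¹ * a + q * b := by
        rw [show c' = c + (c' - c) by abel, WithLp.ofLp_add, map_add, map_add,
          LinearMap.add_apply]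
        exact (norm_add_le _ _).trans (add_le_add hexact hpert)
    _ ≤ √(κ⁻¹ ^ 2 + q ^ 2) * √(a ^ 2 + b ^ 2) := by
        simpa [Fin.sum_univ_two] using
          Real.sum_mul_le_sqrt_mul_sqrt Finset.univ ![κ⁻¹, q] ![a, b]
    _ ≤ √(κ⁻¹ ^ 2 + q ^ 2) * √(‖z‖ ^ 2 * regChebyshev κ k (lam / ‖z‖ ^ 2)) := by gcongr
    _ = _ := by
        have hS : 0 ≤ regChebyshev κ k (lam / ‖z‖ ^ 2) :=
          (mul_nonneg_iff_of_pos_left (by positivity)).mp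
            ((by positivity : 0 ≤ a ^ 2 + b ^ 2).trans hopt)
        rw [Real.sqrt_mul' _ hS, Real.sqrt_sq (norm_nonneg z), hq, inv_pow, one_div]
        ring

end Spectral

section Iterates

variable {E : Type*} [AddCommGroup E] [Module ℝ E] {T : Module.End ℝ E} {x : ℕ → E} {xs : E}
  {k : ℕ}

lemma iterate_sub_eq_pow_apply (hx : ∀ t ≤ k, x (t + 1) = xs + T (x t - xs)) {i : ℕ}
    (hi : i ≤ k + 1) : x i - xs = (T ^ i) (x 0 - xs) := by
  induction i with
  | zero => simp
  | succ t ih =>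
    rw [hx t (by omega), add_sub_cancel_left, ih (by omega), pow_succ', Module.End.mul_apply]

lemma sum_smul_iterate_sub_eq_aeval (hx : ∀ t ≤ k, x (t + 1) = xs + T (x t - xs))
    (c : Fin (k + 1) → ℝ) :
    ∑ i, c i • (x i - xs) = aeval T (ofFn (k + 1) c) (x 0 - xs) := by
  rw [aeval_ofFn, LinearMap.sum_apply]
  exact Finset.sum_congr rfl fun i _ => by
    rw [iterate_sub_eq_pow_apply hx (by omega), LinearMap.smul_apply]

lemma sum_smul_iterate_succ_sub_eq_aeval (hx : ∀ t ≤ k, x (t + 1) = xs + T (x t - xs))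
    (c : Fin (k + 1) → ℝ) :
    ∑ i : Fin (k + 1), c i • (x (i + 1) - x i) = (T - 1) (aeval T (ofFn (k + 1) c) (x 0 - xs)) := by
  rw [← sum_smul_iterate_sub_eq_aeval hx, map_sum]
  refine Finset.sum_congr rfl fun i _ => ?_
  rw [map_smul, hx i (by omega), LinearMap.sub_apply, Module.End.one_apply]
  congr 1
  abel

lemma sum_smul_sub_eq_aeval_sub (hx : ∀ t ≤ k, x (t + 1) = xs + T (x t - xs))
    {c : Fin (k + 1) → ℝ} (hc : ∑ i, c i = 1) (y : ℕ → E) :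
    ∑ i : Fin (k + 1), c i • y i - xs =
      aeval T (ofFn (k + 1) c) (x 0 - xs) - ∑ i : Fin (k + 1), c i • (x i - y i) := by
  rw [← sum_smul_iterate_sub_eq_aeval hx, ← Finset.sum_sub_distrib]
  simp_rw [← smul_sub, sub_sub_sub_cancel_left, smul_sub, Finset.sum_sub_distrib,
    ← Finset.sum_smul, hc, one_smul]

end Iterates

theorem rna_deterministic_bound_general (d k : ℕ) (κ : ℝ) (hκ : κ ∈ Set.Ioo (0:ℝ) 1)
    (G : Matrix (Fin d) (Fin d) ℝ)
    (hG0 : G.PosSemidef)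
    (hG1 : ((1 - κ) • (1 : Matrix (Fin d) (Fin d) ℝ) - G).PosSemidef)
    (xs : EuclideanSpace ℝ (Fin d)) (x xt : ℕ → EuclideanSpace ℝ (Fin d))
    (hx : ∀ t ≤ k, x (t+1) = xs + Matrix.toEuclideanLin G (x t - xs))
    (R Rt E : Matrix (Fin d) (Fin (k+1)) ℝ)
    (hR : ∀ (j : Fin d) (i : Fin (k+1)), R j i = (x (i+1) - x i) j)
    (hE : ∀ (j : Fin d) (i : Fin (k+1)), E j i = (x i - xt i) j)
    (P : Matrix (Fin (k+1)) (Fin (k+1)) ℝ) (hP : P = Rᵀ * R - Rtᵀ * Rt)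
    (lam : ℝ) (hlam : 0 < lam)
    (ct : EuclideanSpace ℝ (Fin (k+1))) (hct : IsRNACoeff Rt lam ct) :
    ‖(∑ i : Fin (k+1), ct i • xt i) - xs‖ ≤
      ‖x 0 - xs‖ * Real.sqrt (regChebyshev κ k (lam / ‖x 0 - xs‖ ^ 2)) *
        Real.sqrt (1 / κ ^ 2 + (k + 1) * ‖x 0 - xs‖ ^ 2 * opNorm P ^ 2 / lam ^ 3) +
      (opNorm E / Real.sqrt (k + 1)) * Real.sqrt (1 + opNorm Rt ^ 2 / lam) := by
  set T := toEuclideanLin G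
  have hRc (c : EuclideanSpace ℝ (Fin (k + 1))) :
      toEuclideanLin R c = (T - 1) (aeval T (ofFn (k + 1) c.ofLp) (x 0 - xs)) := by
    rw [toEuclideanLin_apply_eq_sum hR, sum_smul_iterate_succ_sub_eq_aeval hx]
  obtain ⟨c, hc⟩ := exists_isRNACoeff R hlam
  have hstab := hc.mul_norm_sub_le hct
  rw [← hP] at hstab
  rw [sum_smul_sub_eq_aeval_sub hx hct.1 xt, ← toEuclideanLin_apply_eq_sum hE]
  refine (norm_sub_le _ _).trans (add_le_add ?_ ?_)
  · exact norm_aeval_ofFn_apply_le_of_isMinOn hκ.1 hG0.toEuclideanLin_nonneg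
      (toEuclideanLin_le_smul_one hG1) _ hRc hlam (isRNACoeff_iff.mp hc).2 hstab
  · calc ‖toEuclideanLin E ct‖ ≤ opNorm E * ‖ct‖ := norm_toEuclideanLin_apply_le E ct
      _ ≤ opNorm E * (√(1 + opNorm Rt ^ 2 / lam) / √(k + 1)) := by
          gcongr
          · exact norm_nonneg _
          · exact hct.norm_le hlam
      _ = _ := by ring

/-- Explicit deterministic convergence bound for RNA, combining the stability,
nonlinearity and acceleration bounds. -/
theorem rna_deterministic_bound (d k : ℕ) (κ : ℝ) (hκ : κ ∈ Set.Ioo (0:ℝ) 1)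
    (G : Matrix (Fin d) (Fin d) ℝ) (hGsymm : G.IsSymm)
    (hG0 : G.PosSemidef)
    (hG1 : ((1 - κ) • (1 : Matrix (Fin d) (Fin d) ℝ) - G).PosSemidef)
    (xs : EuclideanSpace ℝ (Fin d)) (x xt : ℕ → EuclideanSpace ℝ (Fin d))
    (hne : x 0 ≠ xs)
    (hx : ∀ t ≤ k, x (t+1) = xs + Matrix.toEuclideanLin G (x t - xs))
    (h0 : xt 0 = x 0)
    (R Rt E : Matrix (Fin d) (Fin (k+1)) ℝ)
    (hR : ∀ (j : Fin d) (i : Fin (k+1)), R j i = (x (i+1) - x i) j)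
    (hRt : ∀ (j : Fin d) (i : Fin (k+1)), Rt j i = (xt (i+1) - xt i) j)
    (hE : ∀ (j : Fin d) (i : Fin (k+1)), E j i = (x i - xt i) j)
    (P : Matrix (Fin (k+1)) (Fin (k+1)) ℝ) (hP : P = Rᵀ * R - Rtᵀ * Rt)
    (lam : ℝ) (hlam : 0 < lam)
    (ct : EuclideanSpace ℝ (Fin (k+1))) (hct : IsRNACoeff Rt lam ct) :
    ‖(∑ i : Fin (k+1), ct i • xt i) - xs‖ ≤
      ‖x 0 - xs‖ * Real.sqrt (regChebyshev κ k (lam / ‖x 0 - xs‖ ^ 2)) *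
        Real.sqrt (1 / κ ^ 2 + (k + 1) * ‖x 0 - xs‖ ^ 2 * opNorm P ^ 2 / lam ^ 3) +
      (opNorm E / Real.sqrt (k + 1)) * Real.sqrt (1 + opNorm Rt ^ 2 / lam) :=
  rna_deterministic_bound_general d k κ hκ G hG0 hG1 xs x xt hx R Rt E hR hE P hP lam hlam ct hct
end
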